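/- Let Q ⊂ ℝ^D be a bounded domain and let V_n : Q → ℝ be a sequence of measurable functions with sup_n ‖V_n‖_{L^∞(Q)} < ∞, converging weakly-* in L^∞(Q) to some V ∈ L^∞(Q) (i.e., ∫_Q V_n g dx → ∫_Q V g dx for every g ∈ L^1(Q)). Suppose in addition that for every ε > 0 and every K ≥ 1 there exists k = k(ε,K) ≥ K such that the set { (n,m) ∈ ℕ×ℕ : |∫_Q ( V_n V_m − V_{k+|n−m|} V_k ) dx| < ε } is statistically significant. Then for every regular summation method {s_{n,N}} and every 1 ≤ q < ∞, the weighted averages (1/N) Σ_{n=1}^N s_{n,N} V_n converge to V in L^q(Q) as N → ∞. -/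

import Mathlib

open MeasureTheory Filter Finset
open scoped ENNReal

/-!
Write `W_N` for the weighted average and `I(n,m) = ∫ V_n V_m`. Expanding the square,
`‖W_N - V‖₂² = N⁻² ∑ₙ ∑ₘ s_{n,N} s_{m,N} I(n,m) - 2 N⁻¹ ∑ₙ s_{n,N} ∫ V_n V + ∫ V²`.
Weak-* convergence gives `∫ V_n V → ∫ V²`, and together with asymptotic stationarity it makes
`I(n,m)` converge to `∫ V²` statistically: off a set of pairs of density zero,
`I(n,m) ≈ I(k + |n - m|, k) ≈ ∫ V V_k ≈ ∫ V²`. A regular summation method has bounded weights,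
so it sees only a vanishing proportion of the exceptional pairs; hence both averages tend to
`∫ V²` and `W_N → V` in `L²`. The `W_N` are uniformly bounded, so by Vitali's theorem the
convergence holds in every `Lᵠ`, `q < ∞`.
-/

/-- A regular summation method with uniform bound `sbar`. -/
def IsRegularSummation (s : ℕ → ℕ → ℝ) (sbar : ℝ) : Prop :=
  (∀ n N, 0 ≤ s n N) ∧ (∀ n N, s n N ≤ sbar) ∧
  (∀ n N, N < n → s n N = 0) ∧
  (∀ N : ℕ, ∑ n ∈ Finset.Icc 1 N, s n N = (N : ℝ))

/-- A set `S ⊆ ℕ × ℕ` is statistically significant if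
`#{(n,m) ∈ S : n, m ≤ N} / N² → 1` as `N → ∞`. -/
def StatSignificant (S : Set (ℕ × ℕ)) : Prop :=
  Filter.Tendsto
    (fun N : ℕ => ((S ∩ {p : ℕ × ℕ | p.1 ≤ N ∧ p.2 ≤ N}).ncard : ℝ) / (N : ℝ) ^ 2)
    Filter.atTop (nhds 1)

def square (N : ℕ) : Set (ℕ × ℕ) := {p | p.1 ≤ N ∧ p.2 ≤ N}

lemma square_eq_coe (N : ℕ) : square N = ↑(range (N + 1) ×ˢ range (N + 1)) := by
  ext p
  simp [square]

lemma finite_square (N : ℕ) : (square N).Finite := by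
  rw [square_eq_coe]
  exact Finset.finite_toSet _

lemma ncard_square (N : ℕ) : (square N).ncard = (N + 1) ^ 2 := by
  rw [square_eq_coe, Set.ncard_coe_finset, card_product, card_range, sq]

lemma ncard_inter_square_add_ncard_compl_inter_square (S : Set (ℕ × ℕ)) (N : ℕ) :
    (S ∩ square N).ncard + (Sᶜ ∩ square N).ncard = (N + 1) ^ 2 := by
  rw [← ncard_square N, Set.inter_comm, Set.inter_comm Sᶜ, ← Set.sdiff_eq]
  exact Set.ncard_inter_add_ncard_sdiff_eq_ncard _ _ (finite_square N)

lemma tendsto_succ_sq_div_sq :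
    Tendsto (fun N : ℕ => ((N : ℝ) + 1) ^ 2 / (N : ℝ) ^ 2) atTop (nhds 1) := by
  have h : Tendsto (fun N : ℕ => (1 + 1 / (N : ℝ)) ^ 2) atTop (nhds ((1 + 0) ^ 2)) :=
    (tendsto_const_nhds.add tendsto_one_div_atTop_nhds_zero_nat).pow 2
  rw [add_zero, one_pow] at h
  refine h.congr' ?_
  filter_upwards [eventually_ne_atTop 0] with N hN
  field_simp

lemma statSignificant_iff_tendsto_compl (S : Set (ℕ × ℕ)) :
    StatSignificant S ↔
      Tendsto (fun N : ℕ => ((Sᶜ ∩ square N).ncard : ℝ) / (N : ℝ) ^ 2) atTop (nhds 0) := by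
  have hsplit : ∀ N : ℕ, ((Sᶜ ∩ square N).ncard : ℝ) / (N : ℝ) ^ 2 =
      ((N : ℝ) + 1) ^ 2 / (N : ℝ) ^ 2 - ((S ∩ square N).ncard : ℝ) / (N : ℝ) ^ 2 := by
    intro N
    rw [eq_sub_iff_add_eq, ← add_div, add_comm]
    congr 1
    exact_mod_cast ncard_inter_square_add_ncard_compl_inter_square S N
  change Tendsto (fun N : ℕ => ((S ∩ square N).ncard : ℝ) / (N : ℝ) ^ 2) atTop (nhds 1) ↔ _
  simp_rw [hsplit]
  constructor <;> intro h <;> simpa using tendsto_succ_sq_div_sq.sub h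

lemma StatSignificant.mono {S T : Set (ℕ × ℕ)} (hS : StatSignificant S) (hST : S ⊆ T) :
    StatSignificant T := by
  rw [statSignificant_iff_tendsto_compl] at hS ⊢
  refine squeeze_zero (fun N => by positivity) (fun N => ?_) hS
  gcongr
  exact (finite_square N).inter_of_right _

lemma StatSignificant.inter {S T : Set (ℕ × ℕ)} (hS : StatSignificant S)
    (hT : StatSignificant T) : StatSignificant (S ∩ T) := by
  rw [statSignificant_iff_tendsto_compl] at hS hT ⊢
  refine squeeze_zero (fun N => by positivity) (fun N => ?_) (by simpa using hS.add hT)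
  rw [← add_div]
  gcongr
  rw [Set.compl_inter, Set.union_inter_distrib_right]
  exact_mod_cast Set.ncard_union_le _ _

lemma statSignificant_of_ncard_compl_inter_square_le {S : Set (ℕ × ℕ)} (c : ℕ)
    (h : ∀ N, (Sᶜ ∩ square N).ncard ≤ c * (N + 1)) : StatSignificant S := by
  rw [statSignificant_iff_tendsto_compl]
  have hlin : Tendsto (fun N : ℕ => (c : ℝ) * ((N : ℝ) + 1) / (N : ℝ) ^ 2) atTop (nhds 0) := by
    have := ((tendsto_const_nhds (x := (c : ℝ))).mul
      ((tendsto_const_nhds (x := (1 : ℝ))).add tendsto_one_div_atTop_nhds_zero_nat)).mul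
        tendsto_one_div_atTop_nhds_zero_nat
    rw [mul_zero] at this
    refine this.congr' ?_
    filter_upwards [eventually_ne_atTop 0] with N hN
    field_simp
  refine squeeze_zero (fun N => by positivity) (fun N => ?_) hlin
  gcongr
  exact_mod_cast h N

lemma statSignificant_le_fst (K : ℕ) : StatSignificant {p : ℕ × ℕ | K ≤ p.1} := by
  refine statSignificant_of_ncard_compl_inter_square_le K fun N => ?_
  calc _ ≤ (range K ×ˢ range (N + 1)).card := by
        rw [← Set.ncard_coe_finset]
        refine Set.ncard_le_ncard (fun p hp => ?_) (Set.toFinite _)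
        simp only [square, Set.mem_inter_iff, Set.mem_compl_iff, Set.mem_ofPred_eq] at hp
        simp only [coe_product, coe_range, Set.mem_prod, Set.mem_Iio]
        omega
    _ = K * (N + 1) := by simp

lemma statSignificant_le_dist (J : ℕ) : StatSignificant {p : ℕ × ℕ | J ≤ Nat.dist p.1 p.2} := by
  refine statSignificant_of_ncard_compl_inter_square_le (2 * J + 1) fun N => ?_
  -- a pair close to the diagonal is determined by its first coordinate and its offset
  have hmaps : Set.MapsTo (fun p : ℕ × ℕ => (p.2 + J - p.1, p.1))
      ({p : ℕ × ℕ | J ≤ Nat.dist p.1 p.2}ᶜ ∩ square N) ↑(range (2 * J + 1) ×ˢ range (N + 1)) := by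
    intro p hp
    simp only [square, Set.mem_inter_iff, Set.mem_compl_iff, Set.mem_ofPred_eq, Nat.dist] at hp
    simp only [coe_product, coe_range, Set.mem_prod, Set.mem_Iio]
    omega
  have hinj : Set.InjOn (fun p : ℕ × ℕ => (p.2 + J - p.1, p.1))
      ({p : ℕ × ℕ | J ≤ Nat.dist p.1 p.2}ᶜ ∩ square N) := by
    intro p hp q hq hpq
    simp only [square, Set.mem_inter_iff, Set.mem_compl_iff, Set.mem_ofPred_eq, Nat.dist] at hp hq
    simp only [Prod.mk.injEq] at hpq
    ext <;> omega
  calc _ ≤ (range (2 * J + 1) ×ˢ range (N + 1)).card := by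
        rw [← Set.ncard_coe_finset]
        exact Set.ncard_le_ncard_of_injOn _ hmaps hinj (Set.toFinite _)
    _ = (2 * J + 1) * (N + 1) := by simp

def StatTendsto (t : ℕ → ℕ → ℝ) (L : ℝ) : Prop :=
  ∀ ε : ℝ, 0 < ε → StatSignificant {p : ℕ × ℕ | |t p.1 p.2 - L| < ε}

lemma statTendsto_of_tendsto {a : ℕ → ℝ} {L : ℝ} (ha : Tendsto a atTop (nhds L)) :
    StatTendsto (fun n _ => a n) L := by
  intro ε hε
  obtain ⟨K, hK⟩ := Metric.tendsto_atTop.mp ha ε hε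
  exact (statSignificant_le_fst K).mono fun p hp => by simpa [Real.dist_eq] using hK p.1 hp

lemma abs_sum_mul_le_of_abs_le {ι : Type*} (P : Finset ι) {w u : ι → ℝ} {W B ε : ℝ}
    (hε : 0 ≤ ε) (hw : ∀ i ∈ P, 0 ≤ w i ∧ w i ≤ W) (hu : ∀ i ∈ P, |u i| ≤ B) :
    |∑ i ∈ P, w i * u i| ≤ ε * ∑ i ∈ P, w i + W * B * #(P.filter fun i => ε ≤ |u i|) := by
  have hterm : ∀ i ∈ P, |w i * u i| ≤ ε * w i + if ε ≤ |u i| then W * B else 0 := by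
    intro i hi
    obtain ⟨hw0, hwW⟩ := hw i hi
    rw [abs_mul, abs_of_nonneg hw0]
    split_ifs with hbig
    · nlinarith [abs_nonneg (u i), hu i hi]
    · nlinarith
  calc |∑ i ∈ P, w i * u i| ≤ ∑ i ∈ P, |w i * u i| := abs_sum_le_sum_abs _ _
    _ ≤ ∑ i ∈ P, (ε * w i + if ε ≤ |u i| then W * B else 0) := sum_le_sum hterm
    _ = _ := by
      rw [sum_add_distrib, ← mul_sum, ← sum_filter, sum_const, nsmul_eq_mul, mul_comm (W * B)]

namespace IsRegularSummation

variable {s : ℕ → ℕ → ℝ} {sbar : ℝ}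

lemma sum_mul_sum_eq (hs : IsRegularSummation s sbar) (N : ℕ) :
    ∑ n ∈ Icc 1 N, ∑ m ∈ Icc 1 N, s n N * s m N = (N : ℝ) ^ 2 := by
  rw [← sum_mul_sum, hs.2.2.2, sq]

lemma abs_double_average_sub_le (hs : IsRegularSummation s sbar) {t : ℕ → ℕ → ℝ} {B L ε : ℝ}
    (htB : ∀ n m, |t n m| ≤ B) (hε : 0 ≤ ε) {N : ℕ} (hN : N ≠ 0) :
    |1 / (N : ℝ) ^ 2 * ∑ n ∈ Icc 1 N, ∑ m ∈ Icc 1 N, s n N * s m N * t n m - L| ≤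
      ε + sbar ^ 2 * (B + |L|) *
        (({p : ℕ × ℕ | |t p.1 p.2 - L| < ε}ᶜ ∩ square N).ncard / (N : ℝ) ^ 2) := by
  obtain ⟨hs0, hsb, -, -⟩ := id hs
  set P := Icc 1 N ×ˢ Icc 1 N
  have hN2 : (0 : ℝ) < (N : ℝ) ^ 2 := by positivity
  have hcentre : ∑ n ∈ Icc 1 N, ∑ m ∈ Icc 1 N, s n N * s m N * t n m - (N : ℝ) ^ 2 * L =
      ∑ p ∈ P, s p.1 N * s p.2 N * (t p.1 p.2 - L) := by
    simp only [← hs.sum_mul_sum_eq N, mul_sub, sum_sub_distrib, sum_mul, P, sum_product]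
  have hbound := abs_sum_mul_le_of_abs_le P (w := fun p => s p.1 N * s p.2 N)
    (u := fun p => t p.1 p.2 - L) (W := sbar ^ 2) (B := B + |L|) hε
    (fun p _ => ⟨mul_nonneg (hs0 _ _) (hs0 _ _), by
      rw [sq]; exact mul_le_mul (hsb _ _) (hsb _ _) (hs0 _ _) ((hs0 0 0).trans (hsb 0 0))⟩)
    (fun p _ => (abs_sub _ _).trans (by grw [htB]))
  have hcount : (#(P.filter fun p => ε ≤ |t p.1 p.2 - L|) : ℝ) ≤
      ({p : ℕ × ℕ | |t p.1 p.2 - L| < ε}ᶜ ∩ square N).ncard := by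
    rw [← Set.ncard_coe_finset]
    refine Nat.cast_le.mpr
      (Set.ncard_le_ncard (fun p hp => ?_) ((finite_square N).inter_of_right _))
    simp only [coe_filter, mem_product, mem_Icc, P, Set.mem_ofPred_eq] at hp
    simp only [square, Set.mem_inter_iff, Set.mem_compl_iff, Set.mem_ofPred_eq, not_lt]
    exact ⟨hp.2, hp.1.1.2, hp.1.2.2⟩
  have hw : ∑ p ∈ P, s p.1 N * s p.2 N = (N : ℝ) ^ 2 := by
    rw [sum_product, hs.sum_mul_sum_eq N]
  rw [hw] at hbound
  have hdiff : 1 / (N : ℝ) ^ 2 * ∑ n ∈ Icc 1 N, ∑ m ∈ Icc 1 N, s n N * s m N * t n m - L =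
      (∑ p ∈ P, s p.1 N * s p.2 N * (t p.1 p.2 - L)) / (N : ℝ) ^ 2 := by
    rw [← hcentre]
    field_simp
  have hB : 0 ≤ B := (abs_nonneg _).trans (htB 0 0)
  rw [hdiff, abs_div, abs_of_pos hN2, div_le_iff₀ hN2]
  calc _ ≤ ε * (N : ℝ) ^ 2 + sbar ^ 2 * (B + |L|) * #(P.filter fun p => ε ≤ |t p.1 p.2 - L|) :=
        hbound
    _ ≤ _ := by
      rw [add_mul, mul_assoc _ (_ / _), div_mul_cancel₀ _ hN2.ne']
      gcongr

theorem tendsto_double_average (hs : IsRegularSummation s sbar) {t : ℕ → ℕ → ℝ} {B L : ℝ}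
    (htB : ∀ n m, |t n m| ≤ B) (ht : StatTendsto t L) :
    Tendsto (fun N : ℕ => 1 / (N : ℝ) ^ 2 * ∑ n ∈ Icc 1 N, ∑ m ∈ Icc 1 N, s n N * s m N * t n m)
      atTop (nhds L) := by
  rw [Metric.tendsto_atTop]
  intro ε hε
  have hsparse := (statSignificant_iff_tendsto_compl _).mp (ht (ε / 2) (half_pos hε))
  have herr := (hsparse.const_mul (sbar ^ 2 * (B + |L|))).eventually
    (gt_mem_nhds (a := ε / 2) (by rw [mul_zero]; exact half_pos hε))
  obtain ⟨N₀, hN₀⟩ := eventually_atTop.mp (herr.and (eventually_ne_atTop 0))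
  refine ⟨N₀, fun N hN => ?_⟩
  obtain ⟨hsmall, hN0⟩ := hN₀ N hN
  rw [Real.dist_eq]
  linarith [hs.abs_double_average_sub_le (L := L) htB (half_pos hε).le hN0]

theorem tendsto_average (hs : IsRegularSummation s sbar) {a : ℕ → ℝ} {L : ℝ}
    (ha : Tendsto a atTop (nhds L)) :
    Tendsto (fun N : ℕ => 1 / (N : ℝ) * ∑ n ∈ Icc 1 N, s n N * a n) atTop (nhds L) := by
  obtain ⟨B, hB⟩ := ha.abs.bddAbove_range
  -- the single average is the double average of `t n m = a n`, as `∑ₘ s_{m,N} = N`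
  refine (hs.tendsto_double_average (t := fun n _ => a n) (fun n _ => hB ⟨n, rfl⟩)
    (statTendsto_of_tendsto ha)).congr fun N => ?_
  have hinner : ∑ n ∈ Icc 1 N, ∑ m ∈ Icc 1 N, s n N * s m N * a n =
      (∑ n ∈ Icc 1 N, s n N * a n) * N := by
    rw [sum_mul]
    refine sum_congr rfl fun n _ => ?_
    rw [← hs.2.2.2 N, mul_sum]
    exact sum_congr rfl fun m _ => by ring
  rw [hinner]
  rcases eq_or_ne N 0 with rfl | hN
  · simp
  · field_simp

end IsRegularSummation

section MeasureTheory

variable {α : Type*} [MeasurableSpace α] {μ : Measure α}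

lemma integrable_mul_of_memLp_top [IsFiniteMeasure μ] {f g : α → ℝ} (hf : MemLp f ∞ μ)
    (hg : MemLp g ∞ μ) :
    Integrable (fun x => f x * g x) μ :=
  (hf.integrable le_top).mul_of_top_left hg

lemma unifIntegrable_of_ae_norm_le {ι β : Type*} [NormedAddCommGroup β] {f : ι → α → β}
    {p : ℝ≥0∞} (hp : 1 ≤ p) (hp' : p ≠ ∞) (hf : ∀ i, AEStronglyMeasurable (f i) μ) {M : ℝ}
    (hM : ∀ i, ∀ᵐ x ∂μ, ‖f i x‖ ≤ M) : UnifIntegrable f p μ := by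
  refine unifIntegrable_of hp hp' hf fun ε _ => ⟨M.toNNReal + 1, fun i => ?_⟩
  have hzero : {x | M.toNNReal + 1 ≤ ‖f i x‖₊}.indicator (f i) =ᵐ[μ] 0 := by
    filter_upwards [hM i] with x hx
    refine Set.indicator_of_notMem (fun hle => ?_) _
    have hle' : (M.toNNReal : ℝ) + 1 ≤ ‖f i x‖ := by exact_mod_cast hle
    linarith [M.le_coe_toNNReal]
  rw [eLpNorm_congr_ae hzero, eLpNorm_zero]
  exact zero_le

lemma tendsto_eLpNorm_two_of_tendsto_integral_sq {f : ℕ → α → ℝ} (hf : ∀ n, MemLp (f n) 2 μ)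
    (h : Tendsto (fun n => ∫ x, f n x ^ 2 ∂μ) atTop (nhds 0)) :
    Tendsto (fun n => eLpNorm (f n) 2 μ) atTop (nhds 0) := by
  have hnorm : ∀ n, eLpNorm (f n) 2 μ = ENNReal.ofReal ((∫ x, f n x ^ 2 ∂μ) ^ (2 : ℝ)⁻¹) := by
    intro n
    rw [(hf n).eLpNorm_eq_integral_rpow_norm two_ne_zero ENNReal.ofNat_ne_top]
    simp only [Real.norm_eq_abs, ENNReal.toReal_ofNat, Real.rpow_two, sq_abs]
  simp_rw [hnorm]
  have := ENNReal.tendsto_ofReal (h.rpow_const (p := (2 : ℝ)⁻¹) (Or.inr (by norm_num)))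
  rwa [Real.zero_rpow (by norm_num), ENNReal.ofReal_zero] at this

end MeasureTheory

section WeightedAverage

variable {α : Type*}

noncomputable def weightedAverage (s : ℕ → ℕ → ℝ) (V : ℕ → α → ℝ) (N : ℕ) (x : α) : ℝ :=
  1 / (N : ℝ) * ∑ n ∈ Icc 1 N, s n N * V n x

lemma IsRegularSummation.abs_weightedAverage_le {s : ℕ → ℕ → ℝ} {sbar : ℝ}
    (hs : IsRegularSummation s sbar) {V : ℕ → α → ℝ} {C : ℝ} {x : α}
    (hC : ∀ n, |V n x| ≤ C) (N : ℕ) : |weightedAverage s V N x| ≤ C := by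
  have hC0 : 0 ≤ C := (abs_nonneg _).trans (hC 0)
  rcases eq_or_ne N 0 with rfl | hN
  · simpa [weightedAverage] using hC0
  have hsum : |∑ n ∈ Icc 1 N, s n N * V n x| ≤ N * C := by
    calc _ ≤ ∑ n ∈ Icc 1 N, |s n N * V n x| := abs_sum_le_sum_abs _ _
      _ ≤ ∑ n ∈ Icc 1 N, s n N * C := sum_le_sum fun n _ => by
          rw [abs_mul, abs_of_nonneg (hs.1 n N)]
          exact mul_le_mul_of_nonneg_left (hC n) (hs.1 n N)
      _ = N * C := by rw [← sum_mul, hs.2.2.2 N]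
  rw [weightedAverage, abs_mul, abs_of_nonneg (by positivity), one_div,
    inv_mul_le_iff₀ (by positivity)]
  exact hsum

variable [MeasurableSpace α] {μ : Measure α}

lemma IsRegularSummation.ae_abs_weightedAverage_le {s : ℕ → ℕ → ℝ} {sbar : ℝ}
    (hs : IsRegularSummation s sbar) {V : ℕ → α → ℝ} {C : ℝ} (hC : ∀ n, ∀ᵐ x ∂μ, |V n x| ≤ C)
    (N : ℕ) : ∀ᵐ x ∂μ, |weightedAverage s V N x| ≤ C :=
  (ae_all_iff.mpr hC).mono fun _ hx => hs.abs_weightedAverage_le hx N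

lemma aestronglyMeasurable_weightedAverage (s : ℕ → ℕ → ℝ) {V : ℕ → α → ℝ}
    (hV : ∀ n, AEStronglyMeasurable (V n) μ) (N : ℕ) :
    AEStronglyMeasurable (weightedAverage s V N) μ := by
  unfold weightedAverage
  fun_prop

lemma integral_weightedAverage_mul (s : ℕ → ℕ → ℝ) {V : ℕ → α → ℝ} {g : α → ℝ}
    (hint : ∀ n, Integrable (fun x => V n x * g x) μ) (N : ℕ) :
    ∫ x, weightedAverage s V N x * g x ∂μ =
      1 / (N : ℝ) * ∑ n ∈ Icc 1 N, s n N * ∫ x, V n x * g x ∂μ := by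
  simp_rw [weightedAverage, mul_assoc, sum_mul, mul_assoc]
  rw [integral_const_mul, integral_finsetSum _ fun n _ => (hint n).const_mul _]
  simp_rw [integral_const_mul]

lemma integral_weightedAverage_mul_self (s : ℕ → ℕ → ℝ) {V : ℕ → α → ℝ}
    (hint : ∀ n m, Integrable (fun x => V n x * V m x) μ) (N : ℕ) :
    ∫ x, weightedAverage s V N x * weightedAverage s V N x ∂μ =
      1 / (N : ℝ) ^ 2 * ∑ n ∈ Icc 1 N, ∑ m ∈ Icc 1 N, s n N * s m N * ∫ x, V n x * V m x ∂μ := by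
  have hpoint : ∀ x, weightedAverage s V N x * weightedAverage s V N x =
      1 / (N : ℝ) ^ 2 * ∑ n ∈ Icc 1 N, ∑ m ∈ Icc 1 N, s n N * s m N * (V n x * V m x) := by
    intro x
    rw [weightedAverage, mul_mul_mul_comm, sum_mul_sum, one_div_mul_one_div, sq]
    simp_rw [mul_mul_mul_comm]
  simp_rw [hpoint]
  rw [integral_const_mul, integral_finsetSum _ fun n _ =>
    integrable_finsetSum _ fun m _ => (hint n m).const_mul _]
  simp_rw [integral_finsetSum _ fun m _ => (hint _ m).const_mul _, integral_const_mul]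

variable [IsFiniteMeasure μ]
  {s : ℕ → ℕ → ℝ} {sbar : ℝ} {V : ℕ → α → ℝ} {Vlim : α → ℝ} {C : ℝ}

theorem tendsto_integral_sq_weightedAverage_sub (hs : IsRegularSummation s sbar)
    (hV : ∀ n, AEStronglyMeasurable (V n) μ) (hC : ∀ n, ∀ᵐ x ∂μ, |V n x| ≤ C)
    (hVlim : MemLp Vlim ∞ μ)
    (hmean : Tendsto (fun n => ∫ x, V n x * Vlim x ∂μ) atTop (nhds (∫ x, Vlim x * Vlim x ∂μ)))
    (hcorr : StatTendsto (fun n m => ∫ x, V n x * V m x ∂μ) (∫ x, Vlim x * Vlim x ∂μ)) :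
    Tendsto (fun N => ∫ x, (weightedAverage s V N x - Vlim x) ^ 2 ∂μ) atTop (nhds 0) := by
  set W := weightedAverage s V
  have hVL : ∀ n, MemLp (V n) ∞ μ := fun n => memLp_top_of_bound (hV n) C (hC n)
  have hWL : ∀ N, MemLp (W N) ∞ μ := fun N =>
    memLp_top_of_bound (aestronglyMeasurable_weightedAverage s hV N) C
      (hs.ae_abs_weightedAverage_le hC N)
  have hcorrB : ∀ n m, |∫ x, V n x * V m x ∂μ| ≤ C * C * μ.real Set.univ := by
    intro n m
    refine norm_integral_le_of_norm_le_const (f := fun x => V n x * V m x) ?_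
    filter_upwards [hC n, hC m] with x hn hm
    rw [norm_mul, Real.norm_eq_abs, Real.norm_eq_abs]
    exact mul_le_mul hn hm (abs_nonneg _) ((abs_nonneg _).trans hn)
  have hWW : Tendsto (fun N => ∫ x, W N x * W N x ∂μ) atTop (nhds (∫ x, Vlim x * Vlim x ∂μ)) :=
    (hs.tendsto_double_average hcorrB hcorr).congr fun N =>
      (integral_weightedAverage_mul_self s
        (fun n m => integrable_mul_of_memLp_top (hVL n) (hVL m)) N).symm
  have hWV : Tendsto (fun N => ∫ x, W N x * Vlim x ∂μ) atTop (nhds (∫ x, Vlim x * Vlim x ∂μ)) :=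
    (hs.tendsto_average hmean).congr fun N =>
      (integral_weightedAverage_mul s (fun n => integrable_mul_of_memLp_top (hVL n) hVlim) N).symm
  have hexpand : ∀ N, ∫ x, (W N x - Vlim x) ^ 2 ∂μ =
      ∫ x, W N x * W N x ∂μ - 2 * ∫ x, W N x * Vlim x ∂μ + ∫ x, Vlim x * Vlim x ∂μ := by
    intro N
    have hiWW := integrable_mul_of_memLp_top (hWL N) (hWL N)
    have hiWV := (integrable_mul_of_memLp_top (hWL N) hVlim).const_mul 2
    have hiWWV : Integrable (fun x => W N x * W N x - 2 * (W N x * Vlim x)) μ := hiWW.sub hiWV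
    rw [← integral_const_mul, ← integral_sub hiWW hiWV,
      ← integral_add hiWWV (integrable_mul_of_memLp_top hVlim hVlim)]
    congr 1 with x
    ring
  simp_rw [hexpand]
  convert (hWW.sub (hWV.const_mul 2)).add_const (∫ x, Vlim x * Vlim x ∂μ) using 2
  ring

theorem tendsto_eLpNorm_weightedAverage_sub (hs : IsRegularSummation s sbar)
    (hV : ∀ n, AEStronglyMeasurable (V n) μ) (hC : ∀ n, ∀ᵐ x ∂μ, |V n x| ≤ C)
    (hVlim : MemLp Vlim ∞ μ)
    (hmean : Tendsto (fun n => ∫ x, V n x * Vlim x ∂μ) atTop (nhds (∫ x, Vlim x * Vlim x ∂μ)))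
    (hcorr : StatTendsto (fun n m => ∫ x, V n x * V m x ∂μ) (∫ x, Vlim x * Vlim x ∂μ))
    {q : ℝ≥0∞} (hq1 : 1 ≤ q) (hq : q ≠ ∞) :
    Tendsto (fun N => eLpNorm (weightedAverage s V N - Vlim) q μ) atTop (nhds 0) := by
  have hW := aestronglyMeasurable_weightedAverage s hV
  have hWC := fun N => hs.ae_abs_weightedAverage_le hC N
  -- uniformly bounded functions converging in `L²` converge in measure, hence in every `Lᵠ`
  have hL2 : Tendsto (fun N => eLpNorm (weightedAverage s V N - Vlim) 2 μ) atTop (nhds 0) :=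
    tendsto_eLpNorm_two_of_tendsto_integral_sq
      (fun N => ((memLp_top_of_bound (hW N) C (hWC N)).sub hVlim).mono_exponent le_top)
      (tendsto_integral_sq_weightedAverage_sub hs hV hC hVlim hmean hcorr)
  exact tendsto_Lp_finite_of_tendstoInMeasure hq1 hq hW (hVlim.mono_exponent le_top)
    (unifIntegrable_of_ae_norm_le hq1 hq hW hWC)
    (tendstoInMeasure_of_tendsto_eLpNorm two_ne_zero hW hVlim.aestronglyMeasurable hL2)

theorem statTendsto_integral_mul_of_asymptotically_stationary (hV : ∀ n, MemLp (V n) ∞ μ)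
    (hVlim : MemLp Vlim ∞ μ)
    (hweak : ∀ g : α → ℝ, Integrable g μ →
      Tendsto (fun n => ∫ x, V n x * g x ∂μ) atTop (nhds (∫ x, Vlim x * g x ∂μ)))
    (hstat : ∀ ε : ℝ, 0 < ε → ∀ K : ℕ, 1 ≤ K → ∃ k : ℕ, K ≤ k ∧
      StatSignificant {p : ℕ × ℕ |
        |∫ x, (V p.1 x * V p.2 x - V (k + Nat.dist p.1 p.2) x * V k x) ∂μ| < ε}) :
    StatTendsto (fun n m => ∫ x, V n x * V m x ∂μ) (∫ x, Vlim x * Vlim x ∂μ) := by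
  intro ε hε
  have hε3 : 0 < ε / 3 := by positivity
  obtain ⟨K, hK⟩ := Metric.tendsto_atTop.mp (hweak Vlim (hVlim.integrable le_top)) (ε / 3) hε3
  obtain ⟨k, hKk, hstat_k⟩ := hstat (ε / 3) hε3 (max K 1) (le_max_right _ _)
  obtain ⟨J, hJ⟩ := Metric.tendsto_atTop.mp
    ((hweak (V k) ((hV k).integrable le_top)).comp (tendsto_add_atTop_nat k))
    (ε / 3) hε3
  -- `I(n,m) ≈ I(k + |n - m|, k) ≈ ∫ V V_k ≈ ∫ V²`
  refine (hstat_k.inter (statSignificant_le_dist J)).mono ?_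
  rintro ⟨n, m⟩ ⟨hnm, hd⟩
  simp only [Set.mem_ofPred_eq] at hnm hd ⊢
  rw [integral_sub (integrable_mul_of_memLp_top (hV n) (hV m))
    (integrable_mul_of_memLp_top (hV _) (hV k))] at hnm
  have hshift := hJ _ hd
  have hlim := hK k ((le_max_left _ _).trans hKk)
  simp only [Function.comp_apply, Real.dist_eq, add_comm _ k] at hshift hlim
  simp_rw [mul_comm (Vlim _) (V k _)] at hshift
  rw [abs_sub_lt_iff] at hnm hshift hlim ⊢
  constructor <;> linarith

end WeightedAverage

theorem weighted_averages_tendsto_of_asymptotic_stationarity_general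
    {D : ℕ} (Q : Set (EuclideanSpace ℝ (Fin D)))
    (hQbdd : Bornology.IsBounded Q)
    (V : ℕ → EuclideanSpace ℝ (Fin D) → ℝ)
    (hVmeas : ∀ n, Measurable (V n))
    (C : ℝ) (hC : ∀ n, ∀ᵐ x ∂(volume.restrict Q), |V n x| ≤ C)
    (Vlim : EuclideanSpace ℝ (Fin D) → ℝ)
    (hVlim : MemLp Vlim ⊤ (volume.restrict Q))
    (hweak : ∀ g : EuclideanSpace ℝ (Fin D) → ℝ, Integrable g (volume.restrict Q) →
      Filter.Tendsto (fun n : ℕ => ∫ x in Q, V n x * g x) Filter.atTop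
        (nhds (∫ x in Q, Vlim x * g x)))
    (hstat : ∀ ε : ℝ, 0 < ε → ∀ K : ℕ, 1 ≤ K → ∃ k : ℕ, K ≤ k ∧
      StatSignificant
        {p : ℕ × ℕ |
          |∫ x in Q, (V p.1 x * V p.2 x - V (k + Nat.dist p.1 p.2) x * V k x)| < ε}) :
    ∀ (s : ℕ → ℕ → ℝ) (sbar : ℝ), IsRegularSummation s sbar →
      ∀ q : ℝ≥0∞, 1 ≤ q → q ≠ ⊤ →
        Filter.Tendsto (fun N : ℕ =>
          eLpNorm (fun x => (1 / (N : ℝ)) * ∑ n ∈ Finset.Icc 1 N, s n N * V n x - Vlim x)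
            q (volume.restrict Q)) Filter.atTop (nhds 0) := by
  intro s sbar hs q hq1 hq
  have : IsFiniteMeasure (volume.restrict Q) :=
    isFiniteMeasure_restrict.mpr hQbdd.measure_lt_top.ne
  have hV : ∀ n, AEStronglyMeasurable (V n) (volume.restrict Q) :=
    fun n => (hVmeas n).aestronglyMeasurable
  have hcorr := statTendsto_integral_mul_of_asymptotically_stationary
    (fun n => memLp_top_of_bound (hV n) C (hC n)) hVlim hweak hstat
  exact tendsto_eLpNorm_weightedAverage_sub hs hV hC hVlim (hweak Vlim (hVlim.integrable le_top))
    hcorr hq1 hq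

/-- Proposition 3.5 of the paper (asymptotic stationarity): if `V_n → V` weakly-* in
`L^∞(Q)` and for every `ε > 0`, `K ≥ 1` there is `k ≥ K` such that the set
`{(n,m) : |∫_Q (V_n V_m − V_{k+|n−m|} V_k)| < ε}` is statistically significant, then
for every regular summation method the weighted averages converge to `V` in `L^q(Q)`,
`1 ≤ q < ∞`. -/
theorem weighted_averages_tendsto_of_asymptotic_stationarity
    {D : ℕ} (Q : Set (EuclideanSpace ℝ (Fin D)))
    (hQopen : IsOpen Q) (hQbdd : Bornology.IsBounded Q)
    (V : ℕ → EuclideanSpace ℝ (Fin D) → ℝ)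
    (hVmeas : ∀ n, Measurable (V n))
    (C : ℝ) (hC : ∀ n, ∀ᵐ x ∂(volume.restrict Q), |V n x| ≤ C)
    (Vlim : EuclideanSpace ℝ (Fin D) → ℝ)
    (hVlim : MemLp Vlim ⊤ (volume.restrict Q))
    (hweak : ∀ g : EuclideanSpace ℝ (Fin D) → ℝ, Integrable g (volume.restrict Q) →
      Filter.Tendsto (fun n : ℕ => ∫ x in Q, V n x * g x) Filter.atTop
        (nhds (∫ x in Q, Vlim x * g x)))
    (hstat : ∀ ε : ℝ, 0 < ε → ∀ K : ℕ, 1 ≤ K → ∃ k : ℕ, K ≤ k ∧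
      StatSignificant
        {p : ℕ × ℕ |
          |∫ x in Q, (V p.1 x * V p.2 x - V (k + Nat.dist p.1 p.2) x * V k x)| < ε}) :
    ∀ (s : ℕ → ℕ → ℝ) (sbar : ℝ), IsRegularSummation s sbar →
      ∀ q : ℝ≥0∞, 1 ≤ q → q ≠ ⊤ →
        Filter.Tendsto (fun N : ℕ =>
          eLpNorm (fun x => (1 / (N : ℝ)) * ∑ n ∈ Finset.Icc 1 N, s n N * V n x - Vlim x)
            q (volume.restrict Q)) Filter.atTop (nhds 0) :=
  weighted_averages_tendsto_of_asymptotic_stationarity_general Q hQbdd V hVmeas C hC Vlim hVlim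
    hweak hstat
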